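/- For the vector field X associated to the system u̇ = -v + h, v̇ = u + h, ẇ = -w + h with h(u,v,w) = a₂v² - a₂w² + 2a₂uv - 2a₂uw, the polynomial F(u,v,w) = w - a₂(v-w)² satisfies XF = -F, so F = 0 is an invariant algebraic surface with cofactor -1. -/

import Mathlib

noncomputable def h2 (a₂ u v w : ℝ) : ℝ :=
  a₂*v^2 - a₂*w^2 + 2*a₂*u*v - 2*a₂*u*w

noncomputable def F2 (a₂ u v w : ℝ) : ℝ :=
  w - a₂*(v - w)^2

lemma deriv_F2_fst (a₂ u v w : ℝ) : deriv (fun s => F2 a₂ s v w) u = 0 := by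
  simp [F2]

lemma hasDerivAt_F2_snd (a₂ u v w : ℝ) :
    HasDerivAt (fun s => F2 a₂ u s w) (-(2 * a₂ * (v - w))) v := by
  unfold F2
  refine (((hasDerivAt_id' v).sub_const w).fun_pow 2).const_mul a₂ |>.const_sub w
    |>.congr_deriv ?_
  norm_num
  ring

lemma hasDerivAt_F2_thd (a₂ u v w : ℝ) :
    HasDerivAt (fun s => F2 a₂ u v s) (1 + 2 * a₂ * (v - w)) w := by
  unfold F2
  refine (hasDerivAt_id' w).fun_sub ((((hasDerivAt_id' w).const_sub v).fun_pow 2).const_mul a₂)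
    |>.congr_deriv ?_
  norm_num
  ring

/-- F = 0 is an invariant algebraic surface with cofactor -1. -/
theorem stmt_2 : ∀ a₂ u v w : ℝ,
    (-v + h2 a₂ u v w) * deriv (fun s => F2 a₂ s v w) u
    + (u + h2 a₂ u v w) * deriv (fun s => F2 a₂ u s w) v
    + (-w + h2 a₂ u v w) * deriv (fun s => F2 a₂ u v s) w
    = -F2 a₂ u v w := by
  intro a₂ u v w
  rw [deriv_F2_fst, (hasDerivAt_F2_snd a₂ u v w).deriv, (hasDerivAt_F2_thd a₂ u v w).deriv]
  -- The partials of F sum to 1, so the h-terms contribute h = a₂(v - w)(v + w + 2u).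
  simp only [h2, F2]
  ring
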